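/- arXiv:1307.6678 — 6 statements merged into one kernel-verified Lean document; each statement's English description precedes it below -/
import Mathlib

section
/- For all m ≥ 1, the identity m·h_m = Σ_{k=1}^{m} p_k·h_{m-k} holds, where p_k is the k-th power sum and h_k the k-th complete homogeneous symmetric polynomial in n variables. -/
/-!
Compare coefficients of a monomial `x^d`. Both sides vanish unless `|d| = m`. If `|d| = m`, then
`h_m` has coefficient `1`, while `x_i^k h_{m-k}` contributes `1` exactly when `k ≤ d_i`; summing
over `1 ≤ k ≤ m` counts each index `i` exactly `d_i` times, giving `∑ d_i = m`.
-/

open MvPolynomial Finset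

theorem Finset.sum_Icc_card_filter_le_eq_sum {ι : Type*} (s : Finset ι) (f : ι → ℕ) {m : ℕ}
    (hf : ∀ i ∈ s, f i ≤ m) : ∑ k ∈ Icc 1 m, #{i ∈ s | k ≤ f i} = ∑ i ∈ s, f i := by
  simp_rw [card_filter]
  rw [sum_comm]
  refine sum_congr rfl fun i hi => ?_
  have hIcc : {k ∈ Icc 1 m | k ≤ f i} = Icc 1 (f i) := by
    ext k
    simp only [mem_filter, mem_Icc]
    have := hf i hi
    omega
  rw [← card_filter, hIcc, Nat.card_Icc, Nat.add_sub_cancel]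

namespace MvPolynomial

variable {σ R : Type*} [CommSemiring R]

theorem prod_map_X_eq_monomial [DecidableEq σ] (s : Multiset σ) :
    (s.map (X : σ → MvPolynomial σ R)).prod = monomial (Multiset.toFinsupp s) 1 := by
  induction s using Multiset.induction with
  | empty => simp
  | cons a s ih =>
    rw [Multiset.map_cons, Multiset.prod_cons, ih, ← Multiset.singleton_add,
      Multiset.toFinsupp_add, Multiset.toFinsupp_singleton, monomial_single_add, pow_one]

variable [Fintype σ]

theorem coeff_psum_mul (k : ℕ) (p : MvPolynomial σ R) (d : σ →₀ ℕ) :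
    coeff d (psum σ R k * p) =
      ∑ i, if k ≤ d i then coeff (d - Finsupp.single i k) p else 0 := by
  simp only [psum, Finset.sum_mul, coeff_sum, X_pow_eq_monomial, coeff_monomial_mul',
    Finsupp.single_le_iff, one_mul]

variable [DecidableEq σ]

theorem coeff_hsymm (m : ℕ) (d : σ →₀ ℕ) :
    coeff d (hsymm σ R m) = if d.degree = m then 1 else 0 := by
  simp only [hsymm, prod_map_X_eq_monomial, coeff_sum, coeff_monomial]
  split_ifs with hd
  · rw [Fintype.sum_eq_single ((Sym.equivNatSum σ m).symm ⟨d, hd⟩)]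
    · simp
    · intro s hs
      refine if_neg fun h => hs ?_
      rw [Equiv.eq_symm_apply, Subtype.ext_iff]
      exact h
  · refine sum_eq_zero fun s _ => if_neg ?_
    rintro rfl
    exact hd (Sym.equivNatSum σ m s).2

theorem coeff_psum_mul_hsymm {k m : ℕ} (hkm : k ≤ m) (d : σ →₀ ℕ) :
    coeff d (psum σ R k * hsymm σ R (m - k)) =
      if d.degree = m then (#{i | k ≤ d i} : R) else 0 := by
  have hdeg {i : σ} (hki : k ≤ d i) :
      (d - Finsupp.single i k).degree = m - k ↔ d.degree = m := by
    have hsplit := congrArg Finsupp.degree (tsub_add_cancel_of_le (Finsupp.single_le_iff.mpr hki))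
    have := Finsupp.le_degree i d
    rw [map_add, Finsupp.degree_single] at hsplit
    omega
  have hterm (i : σ) : (if k ≤ d i then coeff (d - Finsupp.single i k) (hsymm σ R (m - k)) else 0)
      = if d.degree = m then (if k ≤ d i then 1 else 0) else 0 := by
    by_cases hki : k ≤ d i <;> simp [hki, hdeg, coeff_hsymm]
  simp_rw [coeff_psum_mul, hterm]
  split_ifs <;> simp [sum_boole]

theorem natCast_mul_hsymm_eq_sum_psum_mul_hsymm (m : ℕ) :
    (m : MvPolynomial σ R) * hsymm σ R m = ∑ k ∈ Icc 1 m, psum σ R k * hsymm σ R (m - k) := by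
  ext d
  rw [← nsmul_eq_mul, coeff_smul, coeff_hsymm, coeff_sum,
    sum_congr rfl fun k hk => coeff_psum_mul_hsymm (mem_Icc.mp hk).2 d]
  split_ifs with hd
  · have hdm (i : σ) : d i ≤ m := hd ▸ Finsupp.le_degree i d
    rw [← Nat.cast_sum, sum_Icc_card_filter_le_eq_sum _ _ fun i _ => hdm i,
      ← Finsupp.degree_eq_sum, hd, nsmul_one]
  · simp

end MvPolynomial

theorem mul_hsymm_eq_sum_psum_hsymm_general (n m : ℕ) :
    (m : MvPolynomial (Fin n) ℚ) * hsymm (Fin n) ℚ m =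
      ∑ k ∈ Finset.Icc 1 m, psum (Fin n) ℚ k * hsymm (Fin n) ℚ (m - k) :=
  natCast_mul_hsymm_eq_sum_psum_mul_hsymm m

/-- For `m ≥ 1`, `m * h_m = ∑_{k=1}^{m} p_k * h_{m-k}`. -/
theorem mul_hsymm_eq_sum_psum_hsymm (n m : ℕ) (hm : 1 ≤ m) :
    (m : MvPolynomial (Fin n) ℚ) * hsymm (Fin n) ℚ m =
      ∑ k ∈ Finset.Icc 1 m, psum (Fin n) ℚ k * hsymm (Fin n) ℚ (m - k) :=
  mul_hsymm_eq_sum_psum_hsymm_general n m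
end

section
/- For every n×n matrix A over an algebraically closed field k and every integer m ≥ 0, the matrix whose (i,j)-entry is (∂_{ji} s_{m+1})(A), multiplied by (-1)^m, equals A^m + Σ_{k=1}^{m} (-1)^k·s_k(A)·A^{m-k}, where s_k(A) = tr(Λ^k A) are the coefficients (up to sign) of the characteristic polynomial and ∂_{ji} denotes partial differentiation of a polynomial function on gl_n with respect to the matrix entry x_{ji}. -/
open MvPolynomial

/-- The generic `n × n` matrix whose `(i,j)` entry is the coordinate function `x_{ij}`. -/
noncomputable def genMat (k : Type*) [CommRing k] (n : ℕ) :
    Matrix (Fin n) (Fin n) (MvPolynomial (Fin n × Fin n) k) :=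
  Matrix.of fun i j => X (i, j)

/-- `s_m = tr(Λ^m) `, the `m`-th elementary symmetric function of the eigenvalues, regarded
as a polynomial in the matrix entries: up to the sign `(-1)^m` it is the coefficient of
`X^(n-m)` in the characteristic polynomial of the generic matrix (and `s_m = 0` for `m > n`). -/
noncomputable def sPoly (k : Type*) [CommRing k] (n : ℕ) (m : ℕ) :
    MvPolynomial (Fin n × Fin n) k :=
  if m ≤ n then (-1) ^ m * (genMat k n).charpoly.coeff (n - m) else 0

/-!
Write `s_m = (-1)^m [X^m] det(1 - X • G)` for the generic matrix `G`. Jacobi's formula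
`D (det N) = ∑ adj(N)_{ab} D(N_{ba})`, applied to `∂_{ji}` acting on coefficients of
polynomials in `X`, gives `(-1)^m ∂_{ji} s_{m+1} = [X^m] adj(1 - X • G)_{ij}`.
After evaluating at `A`, multiply `adj(1 - X • A) (1 - X • A) = det(1 - X • A)` on the right
by `∑_{l ≤ m} (X • A)^l` and compare coefficients of `X^m`: this gives
`[X^m] adj(1 - X • A) = ∑_{j ≤ m} [X^j] det(1 - X • A) • A^(m-j)`, the right-hand side.
-/

open scoped Polynomial

namespace Derivation

section Product

variable {R A M : Type*} [CommSemiring R] [CommSemiring A] [Algebra R A]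
  [AddCommMonoid M] [Module A M] [Module R M]

theorem map_finset_prod {ι : Type*} [DecidableEq ι] (D : Derivation R A M) (s : Finset ι)
    (f : ι → A) :
    D (∏ i ∈ s, f i) = ∑ i ∈ s, (∏ j ∈ s.erase i, f j) • D (f i) := by
  induction s using Finset.induction_on with
  | empty => simp
  | insert a s ha ih =>
    rw [Finset.prod_insert ha, D.leibniz, ih, Finset.sum_insert ha, Finset.erase_insert ha,
      Finset.smul_sum, add_comm]
    congr 1
    refine Finset.sum_congr rfl fun b hb => ?_
    rw [Finset.erase_insert_of_ne (ne_of_mem_of_not_mem hb ha).symm,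
      Finset.prod_insert (fun h => ha (Finset.mem_of_mem_erase h)), smul_smul]

end Product

variable {R A : Type*} [CommRing R] [CommRing A] [Algebra R A]

open Matrix in
theorem map_det {n : Type*} [Fintype n] [DecidableEq n] (D : Derivation R A A)
    (M : Matrix n n A) : D M.det = ∑ a, ∑ b, M.adjugate a b * D (M b a) := by
  have hcol : D M.det = ∑ a, (M.updateCol a fun i => D (M i a)).det := by
    simp only [det_apply', map_sum, ← zsmul_eq_mul, map_zsmul, D.map_finset_prod, Finset.smul_sum,
      smul_eq_mul]
    rw [Finset.sum_comm]
    refine Fintype.sum_congr _ _ fun a => Fintype.sum_congr _ _ fun σ => ?_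
    rw [← Finset.mul_prod_erase _ _ (Finset.mem_univ a), updateCol_self, mul_comm]
    congr 2
    exact Finset.prod_congr rfl fun i hi => by rw [updateCol_ne (Finset.ne_of_mem_erase hi)]
  rw [hcol]
  refine Fintype.sum_congr _ _ fun a => ?_
  rw [← cramer_apply, cramer_eq_adjugate_mulVec]
  rfl

noncomputable def mapCoeffsSelf (d : Derivation R A A) : Derivation R A[X] A[X] :=
  PolynomialModule.equivPolynomialSelf.compDer d.mapCoeffs

variable (d : Derivation R A A)

@[simp]
theorem coeff_mapCoeffsSelf (p : A[X]) (i : ℕ) : (d.mapCoeffsSelf p).coeff i = d (p.coeff i) :=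
  rfl

@[simp]
theorem mapCoeffsSelf_X : d.mapCoeffsSelf (Polynomial.X : A[X]) = 0 := by
  ext i; simp [Polynomial.coeff_X, apply_ite d]

@[simp]
theorem mapCoeffsSelf_C (a : A) : d.mapCoeffsSelf (Polynomial.C a) = Polynomial.C (d a) := by
  ext i; simp [Polynomial.coeff_C, apply_ite d]

end Derivation

namespace Matrix

variable {n R S : Type*} [DecidableEq n] [CommRing R] [CommRing S]

noncomputable def charmatrixRev (M : Matrix n n R) : Matrix n n R[X] :=
  1 - (Polynomial.X : R[X]) • M.map Polynomial.C

variable (M : Matrix n n R)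

theorem charmatrixRev_map (f : R →+* S) :
    (M.map f).charmatrixRev = M.charmatrixRev.map (Polynomial.map f) := by
  ext i j
  by_cases h : i = j <;> simp [charmatrixRev, h]

variable [Fintype n]

theorem charpolyRev_eq_det_charmatrixRev : M.charpolyRev = M.charmatrixRev.det := rfl

theorem charpolyRev_map (f : R →+* S) : (M.map f).charpolyRev = M.charpolyRev.map f := by
  rw [charpolyRev_eq_det_charmatrixRev, charmatrixRev_map, ← Polynomial.coe_mapRingHom]
  exact (RingHom.map_det _ _).symm

theorem adjugate_charmatrixRev_map (f : R →+* S) :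
    (M.map f).charmatrixRev.adjugate = M.charmatrixRev.adjugate.map (Polynomial.map f) := by
  rw [charmatrixRev_map, ← Polynomial.coe_mapRingHom]
  exact (RingHom.map_adjugate _ _).symm

theorem matPolyEquiv_charmatrixRev :
    matPolyEquiv M.charmatrixRev = 1 - Polynomial.C M * Polynomial.X := by
  simp [charmatrixRev]

theorem coeff_charpolyRev [Nontrivial R] (m : ℕ) :
    M.charpolyRev.coeff m =
      if m ≤ Fintype.card n then M.charpoly.coeff (Fintype.card n - m) else 0 := by
  rw [← reverse_charpoly, Polynomial.coeff_reverse, charpoly_natDegree_eq_dim]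
  split_ifs with h
  · rw [Polynomial.revAt_le h]
  · rw [Polynomial.revAt_eq_self_of_lt (by omega), Polynomial.coeff_eq_zero_of_natDegree_lt
      (by rw [charpoly_natDegree_eq_dim]; omega)]

theorem coeff_matPolyEquiv_adjugate_charmatrixRev (m : ℕ) :
    (matPolyEquiv M.charmatrixRev.adjugate).coeff m =
      ∑ j ∈ Finset.range (m + 1), M.charpolyRev.coeff j • M ^ (m - j) := by
  set B := matPolyEquiv M.charmatrixRev.adjugate
  have hpow : ∀ i,
      (Polynomial.C M * Polynomial.X) ^ i = Polynomial.C (M ^ i) * Polynomial.X ^ i := fun i => by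
    rw [(Polynomial.commute_X _).symm.mul_pow, Polynomial.C_pow]
  set S := ∑ i ∈ Finset.range (m + 1), (Polynomial.C M * Polynomial.X) ^ i
  have hS : ∀ i ≤ m, S.coeff i = M ^ i := fun i hi => by
    simp only [S, hpow, Polynomial.finsetSum_coeff, Polynomial.coeff_C_mul_X_pow]
    rw [Finset.sum_ite_eq, if_pos (Finset.mem_range_succ_iff.mpr hi)]
  have hgeom : B - B * (Polynomial.C M * Polynomial.X) ^ (m + 1) =
      M.charpolyRev.map (algebraMap R (Matrix n n R)) * S := by
    rw [← mul_one B, mul_assoc, one_mul, ← mul_sub, ← mul_neg_geom_sum, ← mul_assoc,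
      ← matPolyEquiv_charmatrixRev, ← map_mul, adjugate_mul, ← matPolyEquiv_smul_one,
      charpolyRev_eq_det_charmatrixRev]
  have hB : (B * (Polynomial.C M * Polynomial.X) ^ (m + 1)).coeff m = 0 := by
    rw [hpow, ← mul_assoc, Polynomial.coeff_mul_X_pow', if_neg (by omega)]
  have hcoeff := congrArg (Polynomial.coeff · m) hgeom
  simp only [Polynomial.coeff_sub, hB, sub_zero, Polynomial.coeff_mul] at hcoeff
  rw [hcoeff, Finset.Nat.sum_antidiagonal_eq_sum_range_succ_mk]
  refine Finset.sum_congr rfl fun j _ => ?_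
  rw [Polynomial.coeff_map, hS _ (Nat.sub_le _ _), Algebra.smul_def]

end Matrix

section GenericMatrix

open Matrix

variable {k : Type*} [CommRing k] {n : ℕ}

theorem genMat_map_eval (A : Matrix (Fin n) (Fin n) k) :
    (genMat k n).map (eval fun p => A p.1 p.2) = A := by
  ext i j; simp [genMat]

theorem mapCoeffsSelf_pderiv_charmatrixRev_genMat (v : Fin n × Fin n) (a b : Fin n) :
    (pderiv v).mapCoeffsSelf ((genMat k n).charmatrixRev b a) =
      -(Polynomial.X *
        Polynomial.C ((Pi.single v 1 : Fin n × Fin n → MvPolynomial _ k) (b, a))) := by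
  rw [charmatrixRev, Matrix.sub_apply, Matrix.smul_apply, map_apply, genMat, of_apply, one_apply,
    smul_eq_mul, map_sub, Derivation.leibniz, apply_ite (pderiv v).mapCoeffsSelf]
  simp [pderiv_X]

theorem pderiv_coeff_succ_charpolyRev_genMat (v : Fin n × Fin n) (r : ℕ) :
    pderiv v ((genMat k n).charpolyRev.coeff (r + 1)) =
      -((genMat k n).charmatrixRev.adjugate v.2 v.1).coeff r := by
  rw [← Derivation.coeff_mapCoeffsSelf, charpolyRev_eq_det_charmatrixRev, Derivation.map_det]
  simp only [mapCoeffsSelf_pderiv_charmatrixRev_genMat]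
  rw [Fintype.sum_eq_single v.2, Fintype.sum_eq_single v.1]
  · simp [mul_comm]
  · intro b hb
    simp [Prod.ext_iff, hb]
  · intro a ha
    exact Fintype.sum_eq_zero _ fun b => by simp [Prod.ext_iff, ha]

theorem sPoly_eq_neg_one_pow_mul_coeff_charpolyRev [Nontrivial k] (m : ℕ) :
    sPoly k n m = (-1) ^ m * (genMat k n).charpolyRev.coeff m := by
  rw [sPoly, coeff_charpolyRev, Fintype.card_fin]
  split_ifs <;> simp

variable (A : Matrix (Fin n) (Fin n) k)

theorem eval_coeff_charpolyRev_genMat (j : ℕ) :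
    eval (fun p => A p.1 p.2) ((genMat k n).charpolyRev.coeff j) = A.charpolyRev.coeff j := by
  rw [← Polynomial.coeff_map, ← charpolyRev_map, genMat_map_eval]

theorem eval_coeff_adjugate_charmatrixRev_genMat (i j : Fin n) (r : ℕ) :
    eval (fun p => A p.1 p.2) (((genMat k n).charmatrixRev.adjugate i j).coeff r) =
      (A.charmatrixRev.adjugate i j).coeff r := by
  conv_rhs => rw [← genMat_map_eval A, adjugate_charmatrixRev_map]
  rw [map_apply, Polynomial.coeff_map]

end GenericMatrix

theorem pderiv_sPoly_matrix_general {k : Type*} [Field k] (n m : ℕ)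
    (A : Matrix (Fin n) (Fin n) k) :
    ((-1 : k) ^ m) • (Matrix.of fun i j =>
        eval (fun p : Fin n × Fin n => A p.1 p.2) (pderiv (j, i) (sPoly k n (m + 1)))) =
      A ^ m + ∑ j ∈ Finset.Icc 1 m,
        ((-1 : k) ^ j * eval (fun p : Fin n × Fin n => A p.1 p.2) (sPoly k n j)) •
          A ^ (m - j) := by
  have hL : ((-1 : k) ^ m) • (Matrix.of fun i j =>
      eval (fun p : Fin n × Fin n => A p.1 p.2) (pderiv (j, i) (sPoly k n (m + 1)))) =
      (matPolyEquiv A.charmatrixRev.adjugate).coeff m := by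
    ext i j
    simp [matPolyEquiv_coeff_apply, sPoly_eq_neg_one_pow_mul_coeff_charpolyRev,
      pderiv_coeff_succ_charpolyRev_genMat, eval_coeff_adjugate_charmatrixRev_genMat, pow_succ,
      ← mul_assoc, ← mul_pow]
  have hR : A ^ m + ∑ j ∈ Finset.Icc 1 m,
      ((-1 : k) ^ j * eval (fun p : Fin n × Fin n => A p.1 p.2) (sPoly k n j)) • A ^ (m - j) =
      ∑ j ∈ Finset.range (m + 1), A.charpolyRev.coeff j • A ^ (m - j) := by
    rw [Finset.range_eq_Ico, Finset.sum_eq_sum_Ico_succ_bot (Nat.zero_lt_succ m), zero_add,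
      Nat.succ_eq_add_one, Finset.Ico_add_one_right_eq_Icc, Polynomial.coeff_zero_eq_eval_zero,
      Matrix.eval_charpolyRev, one_smul, Nat.sub_zero]
    congr 1
    refine Finset.sum_congr rfl fun j _ => ?_
    simp [sPoly_eq_neg_one_pow_mul_coeff_charpolyRev, eval_coeff_charpolyRev_genMat, ← mul_assoc,
      ← mul_pow]
  rw [hL, hR, Matrix.coeff_matPolyEquiv_adjugate_charmatrixRev]

/-- `(-1)^m (∂_{ji} s_{m+1})(A)_{ij} = A^m + ∑_{k=1}^m (-1)^k s_k(A) A^{m-k}`. -/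
theorem pderiv_sPoly_matrix {k : Type*} [Field k] [IsAlgClosed k] (n m : ℕ)
    (A : Matrix (Fin n) (Fin n) k) :
    ((-1 : k) ^ m) • (Matrix.of fun i j =>
        eval (fun p : Fin n × Fin n => A p.1 p.2) (pderiv (j, i) (sPoly k n (m + 1)))) =
      A ^ m + ∑ j ∈ Finset.Icc 1 m,
        ((-1 : k) ^ j * eval (fun p : Fin n × Fin n => A p.1 p.2) (sPoly k n j)) •
          A ^ (m - j) :=
  pderiv_sPoly_matrix_general n m A
end

section
/- Let d̄ be the (n-1)×(n-1) minor of an n×(n-1) matrix B obtained by deleting the first row, and let V = {B ∈ Mat_{n,n-1} : d̄(B) ≠ 0}. Define ψ: V → gl_n by ψ(B) = [e_1|B]·N·[e_1|B]^{-1}, where [e_1|B] is the n×n matrix with first column e_1 and remaining columns those of B, and N is the n×n matrix that is 1 on the first subdiagonal and 0 elsewhere. Then ψ(B) is nilpotent and φ(ψ(B)) = B, where φ(A) = (A(e_1)|...|A^{n-1}(e_1)). Moreover, if A is nilpotent with d̄(φ(A)) ≠ 0 then ψ(φ(A)) = A. -/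
open Matrix

/-- `φ : A ↦ (A e₁ | A² e₁ | ⋯ | Aⁿ e₁)` from `(n+1) × (n+1)` matrices to `(n+1) × n`
matrices. -/
def phiMap {k : Type*} [Field k] (n : ℕ) (A : Matrix (Fin (n + 1)) (Fin (n + 1)) k) :
    Matrix (Fin (n + 1)) (Fin n) k :=
  Matrix.of fun i j => ((A ^ ((j : ℕ) + 1)) *ᵥ (Pi.single 0 1 : Fin (n + 1) → k)) i

/-- The minor `d̄(B)` of an `(n+1) × n` matrix `B`: the determinant of `B` with its first
row deleted. -/
def dbar {k : Type*} [Field k] (n : ℕ) (B : Matrix (Fin (n + 1)) (Fin n) k) : k :=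
  (Matrix.of fun (i j : Fin n) => B i.succ j).det

/-- The `(n+1) × (n+1)` matrix `[e₁|B]` with first column `e₁` and remaining columns those
of `B`. -/
def aug {k : Type*} [Field k] (n : ℕ) (B : Matrix (Fin (n + 1)) (Fin n) k) :
    Matrix (Fin (n + 1)) (Fin (n + 1)) k :=
  Matrix.of fun i j => Fin.cases ((Pi.single 0 1 : Fin (n + 1) → k) i) (fun j' => B i j') j

/-- The regular nilpotent Jordan matrix: `1` on the first subdiagonal, `0` elsewhere. -/
def regNilp (k : Type*) [Field k] (n : ℕ) : Matrix (Fin (n + 1)) (Fin (n + 1)) k :=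
  Matrix.of fun i j => if (i : ℕ) = (j : ℕ) + 1 then 1 else 0

/-- `ψ(B) = [e₁|B] · N · [e₁|B]⁻¹`. -/
noncomputable def psiMap {k : Type*} [Field k] (n : ℕ) (B : Matrix (Fin (n + 1)) (Fin n) k) :
    Matrix (Fin (n + 1)) (Fin (n + 1)) k :=
  aug n B * regNilp k n * (aug n B)⁻¹

/-!
Write `eⱼ` for `Pi.single j 1`, indexed from `0`. The matrix `N = regNilp k n` shifts
`e₀ ↦ e₁ ↦ ⋯ ↦ eₙ ↦ 0`, and `P = aug n B` fixes `e₀` and sends `eⱼ₊₁` to the `j`-th column of `B`.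
So `P · N = ψ(B) · P` says that `ψ(B)` moves `e₀` along the columns of `B` and then to `0`, which
gives both claims about `ψ(B)`. Conversely, a nilpotent `A` satisfies `Aⁿ⁺¹ = 0` (its
characteristic polynomial is `Xⁿ⁺¹`), and the columns of `P = aug n (phiMap n A)` are `Aʲ e₀`,
so `A · P = P · N` and `ψ(φ(A)) = P N P⁻¹ = A`.
-/

theorem Matrix.pow_card_eq_zero_of_isNilpotent {ι R : Type*} [Fintype ι] [DecidableEq ι]
    [CommRing R] [IsDomain R] {A : Matrix ι ι R} (hA : IsNilpotent A) :
    A ^ Fintype.card ι = 0 := by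
  have hchar : A.charpoly = Polynomial.X ^ Fintype.card ι :=
    sub_eq_zero.mp (isNilpotent_charpoly_sub_pow_of_isNilpotent hA).eq_zero
  simpa [hchar] using A.aeval_self_charpoly

section
variable {k : Type*} [Field k] {n : ℕ}

theorem regNilp_mulVec_single_castSucc (j : Fin n) :
    regNilp k n *ᵥ Pi.single j.castSucc 1 = Pi.single j.succ 1 := by
  ext i
  simp [regNilp, Pi.single_apply, Fin.ext_iff]

theorem regNilp_mulVec_single_last : regNilp k n *ᵥ Pi.single (Fin.last n) 1 = 0 := by
  ext i
  simp [regNilp]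
  omega

theorem regNilp_pow_mulVec_single_zero (j : Fin (n + 1)) :
    regNilp k n ^ (j : ℕ) *ᵥ Pi.single 0 1 = Pi.single j 1 := by
  induction j using Fin.induction with
  | zero => rw [Fin.val_zero, pow_zero, one_mulVec]
  | succ j ih =>
    rw [Fin.val_succ, pow_succ', ← mulVec_mulVec, ← Fin.val_castSucc, ih,
      regNilp_mulVec_single_castSucc]

theorem regNilp_pow_succ : regNilp k n ^ (n + 1) = 0 := by
  refine ext_of_mulVec_single fun j => ?_
  calc regNilp k n ^ (n + 1) *ᵥ Pi.single j 1
      = regNilp k n ^ (j : ℕ) *ᵥ regNilp k n *ᵥ regNilp k n ^ n *ᵥ Pi.single 0 1 := by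
        rw [← regNilp_pow_mulVec_single_zero j, mulVec_mulVec, mulVec_mulVec, mulVec_mulVec,
          Matrix.mul_assoc, ← pow_succ', ← pow_add, ← pow_add, add_comm (n + 1)]
    _ = 0 := by
        rw [show regNilp k n ^ n *ᵥ Pi.single 0 1 = Pi.single (Fin.last n) 1 from
          regNilp_pow_mulVec_single_zero (Fin.last n), regNilp_mulVec_single_last, mulVec_zero]
    _ = 0 *ᵥ Pi.single j 1 := (zero_mulVec _).symm

theorem det_aug (B : Matrix (Fin (n + 1)) (Fin n) k) : (aug n B).det = dbar n B := by
  rw [det_succ_column_zero, Fin.sum_univ_succ, Finset.sum_eq_zero fun i _ => by simp [aug]]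
  simp [aug, dbar, submatrix]

theorem aug_mulVec_single_zero (B : Matrix (Fin (n + 1)) (Fin n) k) :
    aug n B *ᵥ Pi.single 0 1 = Pi.single 0 1 := by
  ext i
  simp [aug]

theorem aug_mulVec_single_succ (B : Matrix (Fin (n + 1)) (Fin n) k) (j : Fin n) :
    aug n B *ᵥ Pi.single j.succ 1 = B.col j := by
  ext i
  simp [aug]

theorem isUnit_det_aug {B : Matrix (Fin (n + 1)) (Fin n) k} (hB : dbar n B ≠ 0) :
    IsUnit (aug n B).det := by
  rw [det_aug]
  exact hB.isUnit

theorem semiconjBy_aug_regNilp_psiMap {B : Matrix (Fin (n + 1)) (Fin n) k} (hB : dbar n B ≠ 0) :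
    SemiconjBy (aug n B) (regNilp k n) (psiMap n B) :=
  (nonsing_inv_mul_cancel_right _ _ (isUnit_det_aug hB)).symm

theorem isNilpotent_psiMap {B : Matrix (Fin (n + 1)) (Fin n) k} (hB : dbar n B ≠ 0) :
    IsNilpotent (psiMap n B) := by
  refine ⟨n + 1, ?_⟩
  rw [← ((isUnit_iff_isUnit_det _).mpr (isUnit_det_aug hB)).mul_left_eq_zero,
    ← ((semiconjBy_aug_regNilp_psiMap hB).pow_right (n + 1)).eq, regNilp_pow_succ, mul_zero]

theorem phiMap_psiMap {B : Matrix (Fin (n + 1)) (Fin n) k} (hB : dbar n B ≠ 0) :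
    phiMap n (psiMap n B) = B := by
  refine ext_col fun j => ?_
  calc psiMap n B ^ ((j : ℕ) + 1) *ᵥ Pi.single 0 1
      = psiMap n B ^ ((j : ℕ) + 1) *ᵥ aug n B *ᵥ Pi.single 0 1 := by
        rw [aug_mulVec_single_zero]
    _ = aug n B *ᵥ regNilp k n ^ ((j : ℕ) + 1) *ᵥ Pi.single 0 1 := by
        rw [mulVec_mulVec, mulVec_mulVec, ((semiconjBy_aug_regNilp_psiMap hB).pow_right _).eq]
    _ = B.col j := by
        rw [← Fin.val_succ, regNilp_pow_mulVec_single_zero, aug_mulVec_single_succ]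

theorem aug_phiMap_mulVec_single (A : Matrix (Fin (n + 1)) (Fin (n + 1)) k) (j : Fin (n + 1)) :
    aug n (phiMap n A) *ᵥ Pi.single j 1 = A ^ (j : ℕ) *ᵥ Pi.single 0 1 := by
  induction j using Fin.cases with
  | zero => rw [aug_mulVec_single_zero, Fin.val_zero, pow_zero, one_mulVec]
  | succ j => rw [aug_mulVec_single_succ]; ext i; simp [phiMap]

theorem semiconjBy_aug_phiMap {A : Matrix (Fin (n + 1)) (Fin (n + 1)) k}
    (hA : A ^ (n + 1) = 0) : SemiconjBy (aug n (phiMap n A)) (regNilp k n) A := by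
  refine ext_of_mulVec_single fun j => ?_
  rw [← mulVec_mulVec, ← mulVec_mulVec (M := A), aug_phiMap_mulVec_single,
    mulVec_mulVec (M := A), ← pow_succ']
  induction j using Fin.lastCases with
  | last => rw [regNilp_mulVec_single_last, Fin.val_last, hA, mulVec_zero, zero_mulVec]
  | cast j => rw [regNilp_mulVec_single_castSucc, aug_phiMap_mulVec_single, Fin.val_succ,
      Fin.val_castSucc]

theorem psiMap_phiMap_of_isNilpotent {A : Matrix (Fin (n + 1)) (Fin (n + 1)) k}
    (hA : IsNilpotent A) (hd : dbar n (phiMap n A) ≠ 0) : psiMap n (phiMap n A) = A := by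
  have hpow : A ^ (n + 1) = 0 := by
    simpa using Matrix.pow_card_eq_zero_of_isNilpotent hA
  rw [psiMap, (semiconjBy_aug_phiMap hpow).eq, mul_nonsing_inv_cancel_right _ _ (isUnit_det_aug hd)]

end

theorem psiMap_phiMap_general {k : Type*} [Field k] (n : ℕ) :
    (∀ B : Matrix (Fin (n + 1)) (Fin n) k, dbar n B ≠ 0 →
        IsNilpotent (psiMap n B) ∧ phiMap n (psiMap n B) = B) ∧
    (∀ A : Matrix (Fin (n + 1)) (Fin (n + 1)) k, IsNilpotent A → dbar n (phiMap n A) ≠ 0 →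
        psiMap n (phiMap n A) = A) :=
  ⟨fun _ hB => ⟨isNilpotent_psiMap hB, phiMap_psiMap hB⟩,
    fun _ hA hd => psiMap_phiMap_of_isNilpotent hA hd⟩

/-- For `B` with `d̄(B) ≠ 0`, `ψ(B)` is nilpotent and `φ(ψ(B)) = B`; and for nilpotent `A`
with `d̄(φ(A)) ≠ 0`, `ψ(φ(A)) = A`. -/
theorem psiMap_phiMap {k : Type*} [Field k] (n : ℕ) (hn : 1 ≤ n) :
    (∀ B : Matrix (Fin (n + 1)) (Fin n) k, dbar n B ≠ 0 →
        IsNilpotent (psiMap n B) ∧ phiMap n (psiMap n B) = B) ∧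
    (∀ A : Matrix (Fin (n + 1)) (Fin (n + 1)) k, IsNilpotent A → dbar n (phiMap n A) ≠ 0 →
        psiMap n (phiMap n A) = A) :=
  psiMap_phiMap_general n
end

section
/- Let μ be a partition of n with largest part μ_1, let C be the set of nilpotent n×n matrices all of whose Jordan blocks have size ≤ μ_1 (i.e., A^{μ_1} = 0), and let m = μ_1 - 1. Then the map φ_m: C → Mat_{n,m} given by A ↦ (A e_1 | A^2 e_1 | ... | A^m e_1) is dominant: its image contains the open set of n×m matrices which after deleting the first row still have rank m. -/
/-!
Deleting the first coordinate kills `e₁` but keeps the columns of `B` independent, so `e₁`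
together with the columns of `B` is a linearly independent family `w₀, …, w_m`. Any such family
is a Jordan chain of a nilpotent map: send `wᵢ ↦ wᵢ₊₁`, `w_m ↦ 0`, after first projecting onto
the span of the `wᵢ`. Then `A ^ μ₁ = 0` and `A ^ (j + 1) e₁` is the `j`-th column of `B`.
-/

open Matrix

theorem Matrix.linearIndependent_col_of_rank_eq_card {K m n : Type*} [Field K] [Fintype m]
    [Fintype n] {A : Matrix m n K} (hA : A.rank = Fintype.card n) : LinearIndependent K A.col :=
  linearIndependent_iff_card_eq_finrank_span.mpr <| by
    rw [Set.finrank, ← rank_eq_finrank_span_cols, hA]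

section

variable {K V W : Type*} [DivisionRing K] [AddCommGroup V] [Module K V] [AddCommGroup W]
  [Module K W]

theorem LinearIndependent.finCons_of_comp {m : ℕ} {f : V →ₗ[K] W} {v : Fin m → V}
    (hv : LinearIndependent K (f ∘ v)) {x : V} (hx : x ≠ 0) (hfx : f x = 0) :
    LinearIndependent K (Fin.cons x v : Fin (m + 1) → V) :=
  linearIndependent_finCons.mpr
    ⟨hv.of_comp f, fun hmem => hx (Submodule.disjoint_def.mp (Submodule.range_ker_disjoint hv) x
      hmem hfx)⟩

theorem LinearIndependent.exists_nilpotent_shift {m : ℕ} {v : Fin (m + 1) → V}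
    (hv : LinearIndependent K v) :
    ∃ f : Module.End K V, f ^ (m + 1) = 0 ∧ ∀ j : Fin (m + 1), (f ^ (j : ℕ)) (v 0) = v j := by
  classical
  let s : ℕ → V := fun i => if h : i < m + 1 then v ⟨i, h⟩ else 0
  obtain ⟨T, hT⟩ := (Finsupp.linearCombination K v).exists_leftInverse_of_injective
    (LinearMap.ker_eq_bot.mpr hv)
  -- The range of `f` lies in the span of `v 1, …, v m`, all of which `f ^ m` kills.
  let f : Module.End K V :=
    Finsupp.linearCombination K (fun i : Fin (m + 1) => s (i + 1)) ∘ₗ T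
  have hs : ∀ i (hi : i < m + 1), s i = v ⟨i, hi⟩ := fun i hi => dif_pos hi
  have hs_zero : ∀ i, m + 1 ≤ i → s i = 0 := fun i hi => dif_neg (by omega)
  have hf : ∀ i, f (s i) = s (i + 1) := by
    intro i
    by_cases hi : i < m + 1
    · have hTv : T (v ⟨i, hi⟩) = Finsupp.single ⟨i, hi⟩ 1 := by
        simpa using LinearMap.congr_fun hT (Finsupp.single ⟨i, hi⟩ 1)
      rw [hs i hi, LinearMap.comp_apply, hTv, Finsupp.linearCombination_single, one_smul]
    · rw [hs_zero i (by omega), hs_zero (i + 1) (by omega), map_zero]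
  have hpow : ∀ p i, (f ^ p) (s i) = s (i + p) := by
    intro p
    induction p with
    | zero => simp
    | succ p ih => intro i; rw [pow_succ, Module.End.mul_apply, hf, ih, add_right_comm, add_assoc]
  refine ⟨f, LinearMap.ext fun x => ?_, fun j => ?_⟩
  · have hvanish : ⇑(f ^ m) ∘ (fun i : Fin (m + 1) => s (i + 1)) = 0 :=
      funext fun i => (hpow m (i + 1)).trans (hs_zero _ (by omega))
    rw [pow_succ, Module.End.mul_apply, LinearMap.comp_apply, Finsupp.apply_linearCombination,
      hvanish, Finsupp.linearCombination_zero, LinearMap.zero_apply, LinearMap.zero_apply]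
  · have hj := hpow j 0
    rw [zero_add, hs 0 (Nat.succ_pos m), hs j j.isLt] at hj
    exact hj

end

theorem phi_m_dominant_general {k : Type*} [Field k] (n : ℕ)
    (μ₁ : ℕ) (hμ : 1 ≤ μ₁) (B : Matrix (Fin (n + 1)) (Fin (μ₁ - 1)) k)
    (hB : (Matrix.of fun (i : Fin n) (j : Fin (μ₁ - 1)) => B i.succ j).rank = μ₁ - 1) :
    ∃ A : Matrix (Fin (n + 1)) (Fin (n + 1)) k, A ^ μ₁ = 0 ∧
      (Matrix.of fun (i : Fin (n + 1)) (j : Fin (μ₁ - 1)) =>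
        ((A ^ ((j : ℕ) + 1)) *ᵥ (Pi.single 0 1 : Fin (n + 1) → k)) i) = B := by
  have hcols : LinearIndependent k (LinearMap.funLeft k k Fin.succ ∘ B.col) :=
    Matrix.linearIndependent_col_of_rank_eq_card
      (A := of fun (i : Fin n) (j : Fin (μ₁ - 1)) => B i.succ j) (by rw [hB, Fintype.card_fin])
  have hchain := hcols.finCons_of_comp (x := Pi.single 0 1)
    (Pi.single_ne_zero_iff.mpr one_ne_zero)
    (funext fun i => by simp [LinearMap.funLeft_apply, Fin.succ_ne_zero])
  obtain ⟨f, hnil, hshift⟩ := hchain.exists_nilpotent_shift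
  rw [Nat.sub_add_cancel hμ] at hnil
  refine ⟨LinearMap.toMatrixAlgEquiv' f, by rw [← map_pow, hnil, map_zero], ?_⟩
  ext i j
  have hj := hshift j.succ
  rw [Fin.cons_zero, Fin.cons_succ] at hj
  rw [Matrix.of_apply, ← Matrix.toLinAlgEquiv'_apply, map_pow,
    Matrix.toLinAlgEquiv'_toMatrixAlgEquiv', ← Fin.val_succ, hj]
  rfl

/-- Let `C = {A : A^μ₁ = 0}` (nilpotent matrices with all Jordan blocks of size `≤ μ₁`) and
`m = μ₁ - 1`. The map `φ_m : C → Mat_{n+1, m}`, `A ↦ (A e₁ | ⋯ | A^m e₁)`, is dominant: its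
image contains every matrix which after deleting the first row still has maximal rank `m`. -/
theorem phi_m_dominant {k : Type*} [Field k] [IsAlgClosed k] (n : ℕ) (hn : 1 ≤ n)
    (μ₁ : ℕ) (hμ : 1 ≤ μ₁) (B : Matrix (Fin (n + 1)) (Fin (μ₁ - 1)) k)
    (hB : (Matrix.of fun (i : Fin n) (j : Fin (μ₁ - 1)) => B i.succ j).rank = μ₁ - 1) :
    ∃ A : Matrix (Fin (n + 1)) (Fin (n + 1)) k, A ^ μ₁ = 0 ∧
      (Matrix.of fun (i : Fin (n + 1)) (j : Fin (μ₁ - 1)) =>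
        ((A ^ ((j : ℕ) + 1)) *ᵥ (Pi.single 0 1 : Fin (n + 1) → k)) i) = B :=
  phi_m_dominant_general n μ₁ hμ B hB
end

section
/- Let N be the regular nilpotent n×n Jordan matrix (1's on the first subdiagonal, 0 elsewhere), n ≥ 3, and let N_sr be N with the entry in position (n, n-1) set to 0. Then there is a family S_t ∈ GL_n, defined for t ≠ 0, such that lim_{t→0} S_t^{-1} N S_t = N_sr; in particular N_sr lies in the closure of the conjugacy orbit through the matrices S_t^{-1} N S_t. -/
open Matrix Polynomial

/-! Conjugating `N` by `S_t = diag(1, …, 1, t⁻¹)` multiplies its last row by `t` and its last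
column by `t⁻¹`. The last column of `N` is zero, and the only nonzero entry of its last row is
the `(n, n-1)` entry, so `S_t⁻¹ N S_t = diag(1, …, 1, t) N`, whose entries are polynomial in `t`
and which becomes `N_sr` at `t = 0`. -/

def scaleLast {R : Type*} [Zero R] [One R] (n : ℕ) (t : R) : Matrix (Fin n) (Fin n) R :=
  diagonal fun i => if (i : ℕ) = n - 1 then t else 1

def nilpotentJordan (R : Type*) [Zero R] [One R] (n : ℕ) : Matrix (Fin n) (Fin n) R :=
  of fun i j => if (i : ℕ) = j + 1 then 1 else 0

section scaleLast

variable {R : Type*} [CommSemiring R] {n : ℕ}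

theorem scaleLast_mul_scaleLast (a b : R) :
    scaleLast n a * scaleLast n b = scaleLast n (a * b) := by
  simp only [scaleLast, diagonal_mul_diagonal]
  congr 1
  funext i
  split_ifs <;> simp

theorem scaleLast_one : scaleLast n (1 : R) = 1 := by
  simp [scaleLast]

theorem isUnit_scaleLast {t : R} (ht : IsUnit t) : IsUnit (scaleLast n t) := by
  obtain ⟨u, rfl⟩ := ht
  refine ⟨⟨scaleLast n u, scaleLast n ↑u⁻¹, ?_, ?_⟩, rfl⟩ <;>
    simp [scaleLast_mul_scaleLast, scaleLast_one]

theorem map_scaleLast {S : Type*} [CommSemiring S] (f : R →+* S) (t : R) :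
    (scaleLast n t).map f = scaleLast n (f t) := by
  rw [scaleLast, diagonal_map (map_zero f), scaleLast]
  congr 1
  funext i
  split_ifs <;> simp

theorem nilpotentJordan_mul_scaleLast (t : R) :
    nilpotentJordan R n * scaleLast n t = nilpotentJordan R n := by
  ext i j
  have := i.isLt
  rw [scaleLast, mul_diagonal]
  simp only [nilpotentJordan, of_apply]
  split_ifs <;> first | omega | simp

theorem scaleLast_zero_mul_nilpotentJordan :
    scaleLast n (0 : R) * nilpotentJordan R n = of fun (i j : Fin n) =>
      if (i : ℕ) = n - 1 ∧ (j : ℕ) = n - 2 then 0 else nilpotentJordan R n i j := by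
  ext i j
  have := j.isLt
  rw [scaleLast, diagonal_mul]
  simp only [nilpotentJordan, of_apply]
  split_ifs <;> first | omega | simp

end scaleLast

theorem inv_scaleLast {K : Type*} [Field K] {n : ℕ} {t : K} (ht : t ≠ 0) :
    (scaleLast n t⁻¹)⁻¹ = scaleLast n t :=
  inv_eq_left_inv (by rw [scaleLast_mul_scaleLast, mul_inv_cancel₀ ht, scaleLast_one])

theorem subregular_in_orbit_closure_general {k : Type*} [Field k] (n : ℕ)
    (N Nsr : Matrix (Fin n) (Fin n) k)
    (hN : N = Matrix.of fun (i j : Fin n) => if (i : ℕ) = (j : ℕ) + 1 then 1 else 0)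
    (hNsr : Nsr = Matrix.of fun (i j : Fin n) =>
      if (i : ℕ) = n - 1 ∧ (j : ℕ) = n - 2 then 0 else N i j) :
    ∃ S : k → Matrix (Fin n) (Fin n) k, ∃ P : Matrix (Fin n) (Fin n) (Polynomial k),
      (∀ t : k, t ≠ 0 → IsUnit (S t)) ∧
      (∀ t : k, t ≠ 0 → (S t)⁻¹ * N * S t = Matrix.of fun i j => (P i j).eval t) ∧
      (Matrix.of fun i j => (P i j).eval 0) = Nsr := by
  change N = nilpotentJordan k n at hN
  subst hN hNsr
  have eval_P (t : k) : (scaleLast n X * (nilpotentJordan k n).map C).map (evalRingHom t) =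
      scaleLast n t * nilpotentJordan k n := by
    rw [Matrix.map_mul, map_scaleLast, Matrix.map_map]
    simp [Function.comp_def]
  refine ⟨fun t => scaleLast n t⁻¹, scaleLast n X * (nilpotentJordan k n).map C,
    fun t ht => isUnit_scaleLast (isUnit_iff_ne_zero.2 (inv_ne_zero ht)), fun t ht => ?_, ?_⟩
  · change _ = (scaleLast n X * _).map (evalRingHom t)
    rw [eval_P, inv_scaleLast ht, Matrix.mul_assoc, nilpotentJordan_mul_scaleLast]
  · change (scaleLast n X * (nilpotentJordan k n).map C).map (evalRingHom 0) = _
    rw [eval_P, scaleLast_zero_mul_nilpotentJordan]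

/-- Let `N` be the regular nilpotent `n × n` Jordan matrix (`n ≥ 3`) and `N_sr` the matrix
obtained from `N` by setting the `(n, n-1)` entry to `0` (indices `1`-based; here `0`-based:
entry `(n-1, n-2)`). Then there is a family `S_t ∈ GL_n`, `t ≠ 0`, such that the entries of
`S_t⁻¹ N S_t` are polynomials in `t` whose value at `t = 0` is `N_sr`; in particular
`N_sr = lim_{t→0} S_t⁻¹ N S_t` lies in the closure of the orbit through the `S_t⁻¹ N S_t`. -/
theorem subregular_in_orbit_closure {k : Type*} [Field k] [IsAlgClosed k] (n : ℕ)
    (hn : 3 ≤ n) (N Nsr : Matrix (Fin n) (Fin n) k)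
    (hN : N = Matrix.of fun (i j : Fin n) => if (i : ℕ) = (j : ℕ) + 1 then 1 else 0)
    (hNsr : Nsr = Matrix.of fun (i j : Fin n) =>
      if (i : ℕ) = n - 1 ∧ (j : ℕ) = n - 2 then 0 else N i j) :
    ∃ S : k → Matrix (Fin n) (Fin n) k, ∃ P : Matrix (Fin n) (Fin n) (Polynomial k),
      (∀ t : k, t ≠ 0 → IsUnit (S t)) ∧
      (∀ t : k, t ≠ 0 → (S t)⁻¹ * N * S t = Matrix.of fun i j => (P i j).eval t) ∧
      (Matrix.of fun i j => (P i j).eval 0) = Nsr :=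
  subregular_in_orbit_closure_general n N Nsr hN hNsr
end

section
/- Let λ be a partition of r with at most n-1 parts. Then the number of semi-standard rational tableaux of shape ((r), λ) with entries in {1,...,n} and weight zero equals the number of semi-standard Young tableaux of shape λ with entries in {1,...,n-1}. Here a rational tableau (S,T) of shape ((r),λ) is semi-standard iff S and T are semi-standard, and for each i the number of entries ≤ i in the first column of S plus the number of entries ≤ i in the first column of T is at most i; weight zero means S and T have the same content. -/
/-!
If `T` contained the smallest entry, its corner entry would be that entry, and so would the
first entry of the row `S`, which has the same content as `T`; the column condition at `i = 1`
then fails. Conversely, if all entries of `T` are at least `2`, strictness of columns gives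
`T(a, 0) ≥ a + 2`, so at most `i - 1` entries of the first column of `T` are `≤ i` and the
column condition holds whatever `S` is. A single row is determined by its content, so
`(S, T) ↦ T` is a bijection onto the tableaux with entries in `{2, …, n}`, and lowering every
entry by one finishes the count. (In the code entries start at `0`, so "at least `2`" reads
`1 ≤ T i j`.)
-/

open Finset

theorem Monotone.eq_of_card_filter_eq {r : ℕ} {α : Type*} [LinearOrder α] {f g : Fin r → α}
    (hf : Monotone f) (hg : Monotone g) (h : ∀ v, #{a | f a = v} = #{a | g a = v}) : f = g := by
  have hcontent : (univ.val.map f : Multiset α) = univ.val.map g := by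
    ext v
    simp only [Multiset.count_map, eq_comm (a := v)]
    exact h v
  rw [Fin.univ_val_map, Fin.univ_val_map, Multiset.coe_eq_coe] at hcontent
  exact List.ofFn_injective (hcontent.eq_of_sortedLE hf.sortedLE_ofFn hg.sortedLE_ofFn)

theorem exists_monotone_fin_card_filter_eq {ι : Type*} (s : Finset ι) {n : ℕ} (g : ι → ℕ)
    (hg : ∀ c ∈ s, g c < n) :
    ∃ S : Fin #s → Fin n, Monotone S ∧ ∀ v : ℕ, #{a | (S a : ℕ) = v} = #{c ∈ s | g c = v} := by
  let e := s.equivFin.symm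
  let f : Fin #s → Fin n := fun a => ⟨g (e a), hg _ (e a).2⟩
  refine ⟨f ∘ Tuple.sort f, Tuple.monotone_sort f, fun v => ?_⟩
  calc #{a | (f (Tuple.sort f a) : ℕ) = v} = #{a | (f a : ℕ) = v} :=
        card_equiv (Tuple.sort f) (by simp)
    _ = #{c ∈ s | g c = v} := by
        refine card_bij (fun a _ => e a) (fun a ha => ?_)
          (fun a _ b _ hab => e.injective (Subtype.ext hab)) (fun c hc => ?_)
        · simpa [f] using ha
        · rw [mem_filter] at hc
          exact ⟨e.symm ⟨c, hc.1⟩, by simpa [f] using hc.2, by simp⟩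

namespace SemistandardYoungTableau

variable {μ : YoungDiagram} (T : SemistandardYoungTableau μ)

theorem entry_zero_add_le {a j : ℕ} (h : (a, j) ∈ μ) : T 0 j + a ≤ T a j := by
  induction a with
  | zero => rfl
  | succ a ih =>
    have hstep := T.col_strict (Nat.lt_add_one a) h
    have hprev := ih (μ.up_left_mem (Nat.le_add_right a 1) le_rfl h)
    omega

theorem entry_zero_zero_le {i j : ℕ} (h : (i, j) ∈ μ) : T 0 0 ≤ T i j :=
  (T.col_weak (Nat.zero_le i) (μ.up_left_mem le_rfl (Nat.zero_le j) h)).trans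
    (T.row_weak_of_le (Nat.zero_le j) h)

theorem card_filter_colLen_entry_lt_le {k : ℕ} (hk : ∀ i j, (i, j) ∈ μ → k ≤ T i j) (j i : ℕ) :
    #{a ∈ range (μ.colLen j) | T a j < i} ≤ i - k :=
  calc #{a ∈ range (μ.colLen j) | T a j < i} ≤ #(range (i - k)) := card_le_card fun a ha => by
        rw [mem_filter, mem_range] at ha
        have hmem : (a, j) ∈ μ := μ.mem_iff_lt_colLen.mpr ha.1
        have hcol := T.entry_zero_add_le hmem
        have htop := hk 0 j (μ.up_left_mem (Nat.zero_le a) le_rfl hmem)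
        rw [mem_range]
        omega
    _ = i - k := card_range _

def addConst (k : ℕ) : SemistandardYoungTableau μ where
  entry i j := if (i, j) ∈ μ then T i j + k else 0
  row_weak' {i j₁ j₂} hj hc := by
    simp only [if_pos hc, if_pos (μ.up_left_mem le_rfl hj.le hc)]
    exact Nat.add_le_add_right (T.row_weak hj hc) k
  col_strict' {i₁ i₂ j} hi hc := by
    simp only [if_pos hc, if_pos (μ.up_left_mem hi.le le_rfl hc)]
    exact Nat.add_lt_add_right (T.col_strict hi hc) k
  zeros' h := if_neg h

def subConst (k : ℕ) (hk : ∀ i j, (i, j) ∈ μ → k ≤ T i j) : SemistandardYoungTableau μ where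
  entry i j := T i j - k
  row_weak' hj hc := Nat.sub_le_sub_right (T.row_weak hj hc) k
  col_strict' {i₁ i₂ j} hi hc := by
    have hk₁ := hk _ _ (μ.up_left_mem hi.le le_rfl hc)
    have hlt := T.col_strict hi hc
    show T i₁ j - k < T i₂ j - k
    omega
  zeros' h := by
    show T _ _ - k = 0
    rw [T.zeros h, Nat.zero_sub]

@[simp]
theorem addConst_apply (k i j : ℕ) : T.addConst k i j = if (i, j) ∈ μ then T i j + k else 0 := rfl

@[simp]
theorem subConst_apply (k : ℕ) (hk : ∀ i j, (i, j) ∈ μ → k ≤ T i j) (i j : ℕ) :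
    T.subConst k hk i j = T i j - k := rfl

variable (μ) in
def addConstEquiv (k m : ℕ) :
    {T : SemistandardYoungTableau μ // ∀ i j, (i, j) ∈ μ → T i j < m} ≃
      {T : SemistandardYoungTableau μ // ∀ i j, (i, j) ∈ μ → k ≤ T i j ∧ T i j < m + k} where
  toFun T := ⟨T.1.addConst k, fun i j h => by simp [h, T.2 i j h]⟩
  invFun T := ⟨T.1.subConst k fun i j h => (T.2 i j h).1, fun i j h => by
    have := T.2 i j h
    simp only [subConst_apply]
    omega⟩
  left_inv T := Subtype.ext <| ext fun i j => by
    by_cases h : (i, j) ∈ μ <;> simp [h, T.1.zeros]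
  right_inv T := Subtype.ext <| ext fun i j => by
    by_cases h : (i, j) ∈ μ
    · have := T.2 i j h
      simp only [addConst_apply, subConst_apply, if_pos h]
      omega
    · simp [h, T.1.zeros h]

end SemistandardYoungTableau

section RationalTableau

variable {μ : YoungDiagram} {r : ℕ}

def FirstColumnBound (S : Fin r → ℕ) (T : SemistandardYoungTableau μ) (i : ℕ) : Prop :=
  #{a : Fin r | (a : ℕ) = 0 ∧ S a < i} + #{a ∈ range (μ.colLen 0) | T a 0 < i} ≤ i

def SameContent (S : Fin r → ℕ) (T : SemistandardYoungTableau μ) : Prop :=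
  ∀ v, #{a | S a = v} = #{c ∈ μ.cells | T c.1 c.2 = v}

theorem firstColumnBound_of_one_le_entry (S : Fin r → ℕ) {T : SemistandardYoungTableau μ}
    (hT : ∀ i j, (i, j) ∈ μ → 1 ≤ T i j) {i : ℕ} (hi : 1 ≤ i) : FirstColumnBound S T i := by
  have hrow : #{a : Fin r | (a : ℕ) = 0 ∧ S a < i} ≤ 1 :=
    card_le_one.mpr fun a ha b hb => by
      rw [mem_filter] at ha hb
      exact Fin.ext (ha.2.1.trans hb.2.1.symm)
  have hcol := T.card_filter_colLen_entry_lt_le hT 0 i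
  unfold FirstColumnBound
  omega

theorem one_le_entry_of_firstColumnBound {S : Fin r → ℕ} {T : SemistandardYoungTableau μ}
    (hS : Monotone S) (hST : SameContent S T) (h₁ : FirstColumnBound S T 1) :
    ∀ i j, (i, j) ∈ μ → 1 ≤ T i j := by
  by_contra! ⟨i, j, hij, hzero⟩
  have hT₀ : T 0 0 = 0 := by have := T.entry_zero_zero_le hij; omega
  have hcorner : ((0 : ℕ), (0 : ℕ)) ∈ μ := μ.up_left_mem (Nat.zero_le i) (Nat.zero_le j) hij
  obtain ⟨a, ha⟩ : ({a | S a = 0} : Finset (Fin r)).Nonempty := by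
    rw [← card_pos, hST 0]
    exact card_pos.mpr ⟨(i, j), mem_filter.mpr ⟨(μ.mem_cells _).mpr hij, Nat.lt_one_iff.mp hzero⟩⟩
  have hr : 0 < r := a.pos
  have hS₀ : S ⟨0, hr⟩ = 0 := by
    rw [mem_filter] at ha
    have hle := hS (show (⟨0, hr⟩ : Fin r) ≤ a from Nat.zero_le _)
    omega
  have hrow : 1 ≤ #{a : Fin r | (a : ℕ) = 0 ∧ S a < 1} :=
    card_pos.mpr ⟨⟨0, hr⟩, by simp [hS₀]⟩
  have hcol : 1 ≤ #{a ∈ range (μ.colLen 0) | T a 0 < 1} :=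
    card_pos.mpr ⟨0, by simp [hT₀, μ.mem_iff_lt_colLen.mp hcorner]⟩
  unfold FirstColumnBound at h₁
  omega

end RationalTableau

theorem card_rational_tableaux_general (n r : ℕ) (hn : 1 ≤ n) (μ : YoungDiagram)
    (hcard : μ.card = r) :
    Nat.card {ST : (Fin r → Fin n) × SemistandardYoungTableau μ //
        Monotone ST.1 ∧
        (∀ i j, (i, j) ∈ μ → ST.2 i j < n) ∧
        (∀ i : ℕ, 1 ≤ i → i ≤ n →
          ((Finset.univ.filter fun a : Fin r => (a : ℕ) = 0 ∧ (ST.1 a : ℕ) < i).card +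
            ((Finset.range (μ.colLen 0)).filter fun a => ST.2 a 0 < i).card ≤ i)) ∧
        (∀ v : ℕ, (Finset.univ.filter fun a : Fin r => (ST.1 a : ℕ) = v).card =
          (μ.cells.filter fun c => ST.2 c.1 c.2 = v).card)} =
      Nat.card {T : SemistandardYoungTableau μ // ∀ i j, (i, j) ∈ μ → T i j < n - 1} := by
  obtain ⟨m, rfl⟩ : ∃ m, n = m + 1 := ⟨n - 1, by omega⟩
  subst hcard
  rw [Nat.add_sub_cancel, Nat.card_congr (SemistandardYoungTableau.addConstEquiv μ 1 m)]
  refine Nat.card_eq_of_bijective (fun ST => ⟨ST.1.2, fun i j h =>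
    ⟨one_le_entry_of_firstColumnBound (Fin.val_strictMono.monotone.comp ST.2.1) ST.2.2.2.2
      (ST.2.2.2.1 1 le_rfl (by omega)) i j h, ST.2.2.1 i j h⟩⟩) ⟨?_, ?_⟩
  · intro ⟨⟨S, T⟩, hS, _, _, hST⟩ ⟨⟨S', T'⟩, hS', _, _, hST'⟩ h
    obtain rfl : T = T' := congrArg Subtype.val h
    have hval : Fin.val ∘ S = Fin.val ∘ S' :=
      (Fin.val_strictMono.monotone.comp hS).eq_of_card_filter_eq
        (Fin.val_strictMono.monotone.comp hS') fun v => (hST v).trans (hST' v).symm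
    obtain rfl : S = S' := Fin.val_injective.comp_left hval
    rfl
  · rintro ⟨T, hT⟩
    obtain ⟨S, hS, hST⟩ := exists_monotone_fin_card_filter_eq μ.cells (n := m + 1)
      (fun c => T c.1 c.2) fun c hc => (hT c.1 c.2 ((μ.mem_cells c).mp hc)).2
    exact ⟨⟨(S, T), hS, fun i j h => (hT i j h).2,
      fun i hi _ => firstColumnBound_of_one_le_entry _ (fun i j h => (hT i j h).1) hi, hST⟩, rfl⟩

/-- Let `λ` (here the Young diagram `μ`) be a partition of `r` with at most `n-1` parts.
The number of semistandard rational tableaux `(S, T)` of shape `((r), λ)` with entries in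
`{1, …, n}` (here `0`-based: values `< n`) and weight zero equals the number of
semistandard Young tableaux of shape `λ` with entries in `{1, …, n-1}` (values `< n-1`).
Here `S` is a single-row tableau of length `r`, i.e. a monotone map `Fin r → Fin n`,
`T` is a semistandard tableau of shape `μ` with values `< n`; the semistandardness
condition for the rational tableau is that for each `i ∈ {1, …, n}` the number of entries
`≤ i` in the first column of `S` (which consists of `S 0` alone, when `r > 0`) plus the
number of entries `≤ i` in the first column of `T` is at most `i` (an entry with `0`-based
value `v` is `≤ i` iff `v < i`); weight zero means `S` and `T` have the same content. -/
theorem card_rational_tableaux (n r : ℕ) (hn : 1 ≤ n) (μ : YoungDiagram)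
    (hcard : μ.card = r) (hlen : ∀ i, n - 1 ≤ i → μ.rowLen i = 0) :
    Nat.card {ST : (Fin r → Fin n) × SemistandardYoungTableau μ //
        Monotone ST.1 ∧
        (∀ i j, (i, j) ∈ μ → ST.2 i j < n) ∧
        (∀ i : ℕ, 1 ≤ i → i ≤ n →
          ((Finset.univ.filter fun a : Fin r => (a : ℕ) = 0 ∧ (ST.1 a : ℕ) < i).card +
            ((Finset.range (μ.colLen 0)).filter fun a => ST.2 a 0 < i).card ≤ i)) ∧
        (∀ v : ℕ, (Finset.univ.filter fun a : Fin r => (ST.1 a : ℕ) = v).card =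
          (μ.cells.filter fun c => ST.2 c.1 c.2 = v).card)} =
      Nat.card {T : SemistandardYoungTableau μ // ∀ i j, (i, j) ∈ μ → T i j < n - 1} :=
  card_rational_tableaux_general n r hn μ hcard
end
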